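/- For F as in Example 9.2 (the explicit piecewise-smooth map ℂ³ → ℝ × ℂ), the fibre F^{-1}(0, b) equals {(z₁,z₂,z₃) : |z₁| = |z₂| = |z₃ − b|, Im((z₃−b)z₁z₂) = 0, Re((z₃−b)z₁z₂) ≤ 0} ∪ {(0,0,b)}-type translate of the Harvey–Lawson T²-cone N₀, and is singular precisely at the single point (0,0,b). -/

import Mathlib

/-!
On the level set `a = 0` we have `|z₁| = |z₂| = r`. If `r = 0` the fibre coordinate is `z₃`
itself. Otherwise it is `z₃ + conj (z₁ z₂) / r`, so the fibre over `(0, b)` is cut out by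
`w = -conj u / r` with `w = z₃ - b`, `u = z₁ z₂`, `|u| = r²`. That equation holds iff `|w| = r`
and `w u` is a nonpositive real: it gives `w u = -|u|² / r = -r³`, and conversely a
nonpositive real of modulus `r³` equals `-r³`, which determines `w` as `u ≠ 0`.
-/

open Complex

/-- The explicit piecewise-smooth special Lagrangian fibration F : ℂ³ → ℝ × ℂ of
Example 9.2: F(z₁,z₂,z₃) = (a,b) with 2a = |z₁|²−|z₂|², b = z₃ when
a = z₁ = z₂ = 0, b = z₃ + z̄₁z̄₂/|z₁| when a ≥ 0, z₁ ≠ 0, and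
b = z₃ + z̄₁z̄₂/|z₂| when a < 0. -/
noncomputable def SLfib (p : ℂ × ℂ × ℂ) : ℝ × ℂ :=
  ((‖p.1‖ ^ 2 - ‖p.2.1‖ ^ 2) / 2,
   if 0 ≤ ‖p.1‖ ^ 2 - ‖p.2.1‖ ^ 2 then
     (if p.1 ≠ 0 then
        p.2.2 + (starRingEnd ℂ p.1) * (starRingEnd ℂ p.2.1) / (‖p.1‖ : ℂ)
      else p.2.2)
   else
     p.2.2 + (starRingEnd ℂ p.1) * (starRingEnd ℂ p.2.1) / (‖p.2.1‖ : ℂ))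

open ComplexOrder in
theorem Complex.eq_neg_conj_div_iff (w u : ℂ) {r : ℝ} (hr : 0 < r) (hu : ‖u‖ = r ^ 2) :
    w = -starRingEnd ℂ u / r ↔ ‖w‖ = r ∧ (w * u).im = 0 ∧ (w * u).re ≤ 0 := by
  have hr' : (r : ℂ) ≠ 0 := by exact_mod_cast hr.ne'
  have hconj : starRingEnd ℂ u * u = ((r ^ 4 : ℝ) : ℂ) := by
    rw [mul_comm, mul_conj, normSq_eq_norm_sq, hu]; push_cast; ring
  constructor
  · rintro rfl
    have hwu : -starRingEnd ℂ u / r * u = ((-r ^ 3 : ℝ) : ℂ) := by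
      rw [div_mul_eq_mul_div, neg_mul, hconj]; field_simp; push_cast; ring
    refine ⟨?_, by rw [hwu, ofReal_im], by rw [hwu, ofReal_re]; nlinarith [pow_pos hr 3]⟩
    rw [norm_div, norm_neg, norm_conj, hu, norm_real, Real.norm_of_nonneg hr.le]
    field_simp
  · rintro ⟨hw, him, hre⟩
    have hwu : w * u = ((-r ^ 3 : ℝ) : ℂ) := by
      have h := eq_coe_norm_of_nonneg (neg_nonneg.mpr (nonpos_iff.mpr ⟨hre, him⟩))
      rw [norm_neg, norm_mul, hw, hu] at h
      push_cast at h ⊢; linear_combination -h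
    have hu0 : u ≠ 0 := by
      rintro rfl; rw [norm_zero] at hu; nlinarith [pow_pos hr 2]
    field_simp
    apply mul_right_cancel₀ hu0
    push_cast at hwu hconj
    linear_combination (r : ℂ) * hwu + hconj

theorem SLfib_zero_zero (z₃ : ℂ) : SLfib (0, 0, z₃) = (0, z₃) := by
  simp [SLfib]

theorem SLfib_of_norm_eq {z₁ z₂ : ℂ} (h : ‖z₁‖ = ‖z₂‖) (h₁ : z₁ ≠ 0) (z₃ : ℂ) :
    SLfib (z₁, z₂, z₃) = (0, z₃ + starRingEnd ℂ z₁ * starRingEnd ℂ z₂ / ‖z₁‖) := by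
  simp [SLfib, h, h₁]

theorem SLfib_eq_mk_zero_iff (b z₁ z₂ z₃ : ℂ) :
    SLfib (z₁, z₂, z₃) = (0, b) ↔
      ‖z₁‖ = ‖z₂‖ ∧ ‖z₂‖ = ‖z₃ - b‖ ∧
        ((z₃ - b) * z₁ * z₂).im = 0 ∧ ((z₃ - b) * z₁ * z₂).re ≤ 0 := by
  by_cases h : ‖z₁‖ = ‖z₂‖
  swap
  · refine iff_of_false (fun hF ↦ h ?_) (fun hR ↦ h hR.1)
    have h0 : (‖z₁‖ ^ 2 - ‖z₂‖ ^ 2) / 2 = 0 := congrArg Prod.fst hF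
    nlinarith [norm_nonneg z₁, norm_nonneg z₂]
  by_cases h₁ : z₁ = 0
  · obtain rfl : z₂ = 0 := by rwa [h₁, norm_zero, eq_comm, norm_eq_zero] at h
    subst h₁
    simp [SLfib_zero_zero, eq_comm, sub_eq_zero]
  have hr : 0 < ‖z₁‖ := norm_pos_iff.mpr h₁
  have hu : ‖z₁ * z₂‖ = ‖z₁‖ ^ 2 := by rw [norm_mul, ← h, sq]
  rw [SLfib_of_norm_eq h h₁, Prod.mk.injEq, ← h, mul_assoc]
  simp only [true_and]
  rw [eq_comm (b := ‖z₃ - b‖), ← eq_neg_conj_div_iff _ _ hr hu, map_mul]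
  constructor <;> intro e <;> linear_combination e

theorem stmt18 (b : ℂ) :
    SLfib ⁻¹' {((0 : ℝ), b)} =
      {p : ℂ × ℂ × ℂ |
        ‖p.1‖ = ‖p.2.1‖ ∧
        ‖p.2.1‖ = ‖p.2.2 - b‖ ∧
        ((p.2.2 - b) * p.1 * p.2.1).im = 0 ∧
        ((p.2.2 - b) * p.1 * p.2.1).re ≤ 0} ∧
    ((0 : ℂ), (0 : ℂ), b) ∈ SLfib ⁻¹' {((0 : ℝ), b)} ∧
    {p ∈ SLfib ⁻¹' {((0 : ℝ), b)} | p.1 = 0 ∧ p.2.1 = 0}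
      = {((0 : ℂ), (0 : ℂ), b)} := by
  have hfibre : SLfib ⁻¹' {((0 : ℝ), b)} = {p : ℂ × ℂ × ℂ |
      ‖p.1‖ = ‖p.2.1‖ ∧ ‖p.2.1‖ = ‖p.2.2 - b‖ ∧
        ((p.2.2 - b) * p.1 * p.2.1).im = 0 ∧ ((p.2.2 - b) * p.1 * p.2.1).re ≤ 0} :=
    Set.ext fun ⟨z₁, z₂, z₃⟩ ↦ SLfib_eq_mk_zero_iff b z₁ z₂ z₃
  have hcone : ((0 : ℂ), (0 : ℂ), b) ∈ SLfib ⁻¹' {((0 : ℝ), b)} := SLfib_zero_zero b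
  refine ⟨hfibre, hcone, ?_⟩
  ext ⟨z₁, z₂, z₃⟩
  simp only [Set.mem_sep_iff, Set.mem_singleton_iff, Prod.mk.injEq]
  constructor
  · rintro ⟨hp, rfl, rfl⟩
    simpa [SLfib_zero_zero, eq_comm] using hp
  · rintro ⟨rfl, rfl, rfl⟩
    exact ⟨hcone, rfl, rfl⟩
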